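/- arXiv:2404.02021 — 2 statements merged into one kernel-verified Lean document; each statement's English description precedes it below -/
import Mathlib

section
/- A nonempty 3-graph H is 123-inducible if and only if m_pair(H) = 1/3. -/
/-- A 3-uniform hypergraph on a finite subset of `ℕ`. -/
structure ThreeGraph where
  verts : Finset ℕ
  edges : Finset (Finset ℕ)
  card_eq : ∀ e ∈ edges, e.card = 3
  subset_verts : ∀ e ∈ edges, e ⊆ verts

/-- `χ` (on 3-element subsets of `{0, …, N-1}`) contains a copy of `H` in color `c`
(`true` = red, `false` = blue). -/
def hasMonoCopy (N : ℕ) (χ : Finset ℕ → Bool) (H : ThreeGraph) (c : Bool) : Prop :=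
  ∃ φ : ℕ → ℕ, Set.InjOn φ ↑H.verts ∧ (∀ v ∈ H.verts, φ v < N) ∧
    ∀ e ∈ H.edges, χ (e.image φ) = c

/-- The Ramsey number `r(G, H)`: the least `N` such that every red/blue coloring of the
triples of an `N`-element set contains a red copy of `G` or a blue copy of `H`. -/
noncomputable def ramsey (G H : ThreeGraph) : ℕ :=
  sInf {N : ℕ | ∀ χ : Finset ℕ → Bool,
    hasMonoCopy N χ G true ∨ hasMonoCopy N χ H false}

/-- The complete tripartite 3-graph `K_{a,b,c}^{(3)}`. -/
def tripartite (a b c : ℕ) : ThreeGraph where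
  verts := Finset.range (a + b + c)
  edges := ((Finset.range (a + b + c)).powersetCard 3).filter (fun e =>
    (e.filter (fun x => x < a)).card = 1 ∧
    (e.filter (fun x => a ≤ x ∧ x < a + b)).card = 1 ∧
    (e.filter (fun x => a + b ≤ x)).card = 1)
  card_eq := fun e he => (Finset.mem_powersetCard.mp (Finset.mem_filter.mp he).1).2
  subset_verts := fun e he => (Finset.mem_powersetCard.mp (Finset.mem_filter.mp he).1).1

/-- The complete 3-graph `K_n^{(3)}`. -/
def completeTG (n : ℕ) : ThreeGraph where
  verts := Finset.range n
  edges := (Finset.range n).powersetCard 3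
  card_eq := fun e he => (Finset.mem_powersetCard.mp he).2
  subset_verts := fun e he => (Finset.mem_powersetCard.mp he).1

/-- The shadow of a set of 3-edges: all 2-element subsets of its edges. -/
def shadowOf (E : Finset (Finset ℕ)) : Finset (Finset ℕ) :=
  E.biUnion (fun e => e.powersetCard 2)

/-- An oriented 3-graph (given by its edge set of ordered triples): it contains at most one of
the six coordinate permutations of any ordered triple and no triple with a repeated
coordinate. -/
def Oriented (E : Set (ℕ × ℕ × ℕ)) : Prop :=
  ∀ a b c : ℕ, (a, b, c) ∈ E →
    (a ≠ b ∧ b ≠ c ∧ a ≠ c) ∧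
    (a, c, b) ∉ E ∧ (b, a, c) ∉ E ∧ (b, c, a) ∉ E ∧ (c, a, b) ∉ E ∧ (c, b, a) ∉ E

/-- `f` is a pair homomorphism from `H`, ordered by the (injective on `V(H)`) function `ord`,
to the oriented 3-graph with edge set `E`. -/
def IsPairHom (H : ThreeGraph) (ord : ℕ → ℕ) (E : Set (ℕ × ℕ × ℕ))
    (f : Finset ℕ → ℕ) : Prop :=
  Set.InjOn ord ↑H.verts ∧
  ∀ e ∈ H.edges, ∀ u v w : ℕ, e = {u, v, w} → ord u < ord v → ord v < ord w →
    (f {u, v} ≠ f {v, w} ∧ f {v, w} ≠ f {u, w} ∧ f {u, v} ≠ f {u, w}) ∧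
    (f {u, v}, f {v, w}, f {u, w}) ∈ E

/-- `v(f(H'))` for the subhypergraph with edge set `E'`: the number of vertices of the image,
i.e. the size of the image of the shadow of `E'` under `f`. -/
def imageVerts (f : Finset ℕ → ℕ) (E' : Finset (Finset ℕ)) : ℕ :=
  ((shadowOf E').image f).card

/-- `e(f(H'))` for the subhypergraph with edge set `E'`: the number of distinct image triples. -/
noncomputable def imageEdges (ord : ℕ → ℕ) (f : Finset ℕ → ℕ)
    (E' : Finset (Finset ℕ)) : ℕ :=
  Set.ncard {p : ℕ × ℕ × ℕ | ∃ e ∈ E', ∃ u v w : ℕ,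
    e = ({u, v, w} : Finset ℕ) ∧ ord u < ord v ∧ ord v < ord w ∧
    p = (f {u, v}, f {v, w}, f {u, w})}

/-- The pair density `m_pair(H)`: the minimum, over all orderings of `V(H)` and all pair
homomorphisms `f` from `H` to any oriented 3-graph, of the maximum over all nonempty
subhypergraphs `H' ⊆ H` of `e(f(H')) / v(f(H'))`. -/
noncomputable def mpair (H : ThreeGraph) : ℝ :=
  sInf {q : ℝ | ∃ (ord : ℕ → ℕ) (E : Set (ℕ × ℕ × ℕ)) (f : Finset ℕ → ℕ),
    Oriented E ∧ IsPairHom H ord E f ∧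
    q = sSup {r : ℝ | ∃ E' : Finset (Finset ℕ), E' ⊆ H.edges ∧ E'.Nonempty ∧
      r = (imageEdges ord f E' : ℝ) / (imageVerts f E' : ℝ)}}

/-- The set of 3-edges `E` contains a Berge cycle: `t ≥ 2` distinct vertices and `t` distinct
edges with `v i, v (i+1) ∈ e i` cyclically. -/
def HasBergeCycle (E : Set (Finset ℕ)) : Prop :=
  ∃ t : ℕ, 2 ≤ t ∧ ∃ (v : ZMod t → ℕ) (e : ZMod t → Finset ℕ),
    Function.Injective v ∧ Function.Injective e ∧
    ∀ i : ZMod t, e i ∈ E ∧ v i ∈ e i ∧ v (i + 1) ∈ e i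

/-- `H` is avoidable: for every ordering and every pair homomorphism `f` from `H` to an
oriented 3-graph, the 3-graph of underlying vertex sets of the image edges has a Berge cycle. -/
def Avoidable (H : ThreeGraph) : Prop :=
  ∀ (ord : ℕ → ℕ) (E : Set (ℕ × ℕ × ℕ)) (f : Finset ℕ → ℕ),
    Oriented E → IsPairHom H ord E f →
    HasBergeCycle {s : Finset ℕ | ∃ e ∈ H.edges, ∃ u v w : ℕ,
      e = ({u, v, w} : Finset ℕ) ∧ ord u < ord v ∧ ord v < ord w ∧
      s = ({f {u, v}, f {v, w}, f {u, w}} : Finset ℕ)}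

/-- A linear 3-graph: any two distinct edges share at most one vertex. -/
def LinearTG (F : ThreeGraph) : Prop :=
  ∀ e₁ ∈ F.edges, ∀ e₂ ∈ F.edges, e₁ ≠ e₂ → (e₁ ∩ e₂).card ≤ 1
/-- `H` is 123-inducible: there is a linear order on `V(H)` (given by an injective `ord`) and a
labelling of pairs by `{1,2,3}` (here `Fin 3`, with `0,1,2` standing for `1,2,3`) such that for
every edge `{u,v,w}` with `u < v < w`, the pair `uv` is labelled `1`, `vw` is labelled `2` and
`uw` is labelled `3`. -/
def Inducible123 (H : ThreeGraph) : Prop :=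
  ∃ (ord : ℕ → ℕ) (lab : Finset ℕ → Fin 3),
    Set.InjOn ord ↑H.verts ∧
    ∀ e ∈ H.edges, ∀ u v w : ℕ, e = {u, v, w} → ord u < ord v → ord v < ord w →
      lab {u, v} = 0 ∧ lab {v, w} = 1 ∧ lab {u, w} = 2


lemma card_triple_eq {a b c : ℕ} (h1 : a ≠ b) (h2 : b ≠ c) (h3 : a ≠ c) :
    ({a, b, c} : Finset ℕ).card = 3 := by
  rw [Finset.card_insert_of_notMem (by simp [h1, h3]),
    Finset.card_insert_of_notMem (by simp [h2]), Finset.card_singleton]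

lemma card_triple_le {a b c : ℕ} : ({a, b, c} : Finset ℕ).card ≤ 3 := by
  refine (Finset.card_insert_le _ _).trans (Nat.succ_le_succ ?_)
  exact (Finset.card_insert_le _ _).trans (by simp)

lemma sorted_unique {ord : ℕ → ℕ} {u v w a b c : ℕ}
    (hs : ({u, v, w} : Finset ℕ) = {a, b, c})
    (h1 : ord u < ord v) (h2 : ord v < ord w)
    (h3 : ord a < ord b) (h4 : ord b < ord c) : u = a ∧ v = b ∧ w = c := by
  have ha : a ∈ ({u, v, w} : Finset ℕ) := by rw [hs]; simp
  have hb : b ∈ ({u, v, w} : Finset ℕ) := by rw [hs]; simp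
  have hc : c ∈ ({u, v, w} : Finset ℕ) := by rw [hs]; simp
  simp only [Finset.mem_insert, Finset.mem_singleton] at ha hb hc
  rcases ha with rfl | rfl | rfl <;> rcases hb with rfl | rfl | rfl <;>
    rcases hc with rfl | rfl | rfl <;> first
    | exact ⟨rfl, rfl, rfl⟩
    | omega

lemma exists_sorted (ord : ℕ → ℕ) {e : Finset ℕ} (h3 : e.card = 3)
    (hinj : ∀ a ∈ e, ∀ b ∈ e, ord a = ord b → a = b) :
    ∃ u v w : ℕ, e = ({u, v, w} : Finset ℕ) ∧ ord u < ord v ∧ ord v < ord w := by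
  obtain ⟨a, b, c, hab, hac, hbc, rfl⟩ := Finset.card_eq_three.mp h3
  have ma : a ∈ ({a, b, c} : Finset ℕ) := by simp
  have mb : b ∈ ({a, b, c} : Finset ℕ) := by simp
  have mc : c ∈ ({a, b, c} : Finset ℕ) := by simp
  have oab : ord a ≠ ord b := fun h => hab (hinj a ma b mb h)
  have oac : ord a ≠ ord c := fun h => hac (hinj a ma c mc h)
  have obc : ord b ≠ ord c := fun h => hbc (hinj b mb c mc h)
  rcases Nat.lt_or_ge (ord a) (ord b) with h1 | h1 <;>
    rcases Nat.lt_or_ge (ord b) (ord c) with h2 | h2 <;>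
    rcases Nat.lt_or_ge (ord a) (ord c) with h4 | h4
  · exact ⟨a, b, c, rfl, h1, h2⟩
  · exact ⟨a, b, c, rfl, h1, h2⟩
  · exact ⟨a, c, b, by ext x; simp; tauto, by omega, by omega⟩
  · exact ⟨c, a, b, by ext x; simp; tauto, by omega, by omega⟩
  · exact ⟨b, a, c, by ext x; simp; tauto, by omega, by omega⟩
  · exact ⟨b, c, a, by ext x; simp; tauto, by omega, by omega⟩
  · omega
  · exact ⟨c, b, a, by ext x; simp; tauto, by omega, by omega⟩

lemma powersetCard_two_triple {u v w : ℕ} (huv : u ≠ v) (hvw : v ≠ w) (huw : u ≠ w) :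
    ({u, v, w} : Finset ℕ).powersetCard 2 =
      ({{u, v}, {v, w}, {u, w}} : Finset (Finset ℕ)) := by
  ext p
  simp only [Finset.mem_powersetCard, Finset.mem_insert, Finset.mem_singleton]
  constructor
  · rintro ⟨hsub, hcard⟩
    obtain ⟨x, y, hxy, rfl⟩ := Finset.card_eq_two.mp hcard
    have hx := hsub (Finset.mem_insert_self x {y})
    have hy := hsub (Finset.mem_insert_of_mem (Finset.mem_singleton_self y))
    simp only [Finset.mem_insert, Finset.mem_singleton] at hx hy
    rcases hx with rfl | rfl | rfl <;> rcases hy with rfl | rfl | rfl <;>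
      first
      | exact absurd rfl hxy
      | exact Or.inl rfl
      | exact Or.inl (Finset.pair_comm _ _)
      | exact Or.inr (Or.inl rfl)
      | exact Or.inr (Or.inl (Finset.pair_comm _ _))
      | exact Or.inr (Or.inr rfl)
      | exact Or.inr (Or.inr (Finset.pair_comm _ _))
  · rintro (rfl | rfl | rfl) <;>
      refine ⟨by intro x hx; simp at hx ⊢; tauto, ?_⟩ <;>
      [exact Finset.card_pair huv; exact Finset.card_pair hvw; exact Finset.card_pair huw]

open Classical in
/-- The sorted representative of a 3-set under `ord`, if it exists. -/
noncomputable def sortTrip (ord : ℕ → ℕ) (e : Finset ℕ) : ℕ × ℕ × ℕ :=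
  if h : ∃ u v w : ℕ, e = ({u, v, w} : Finset ℕ) ∧ ord u < ord v ∧ ord v < ord w then
    (h.choose, h.choose_spec.choose, h.choose_spec.choose_spec.choose)
  else (0, 0, 0)

/-- The image triple of an edge under a pair map. -/
noncomputable def Fmap (ord : ℕ → ℕ) (f : Finset ℕ → ℕ) (e : Finset ℕ) : ℕ × ℕ × ℕ :=
  (f {(sortTrip ord e).1, (sortTrip ord e).2.1},
   f {(sortTrip ord e).2.1, (sortTrip ord e).2.2},
   f {(sortTrip ord e).1, (sortTrip ord e).2.2})

lemma Fmap_eq (ord : ℕ → ℕ) (f : Finset ℕ → ℕ) {e : Finset ℕ} {u v w : ℕ}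
    (he : e = ({u, v, w} : Finset ℕ)) (h1 : ord u < ord v) (h2 : ord v < ord w) :
    Fmap ord f e = (f {u, v}, f {v, w}, f {u, w}) := by
  classical
  have hex : ∃ u v w : ℕ, e = ({u, v, w} : Finset ℕ) ∧ ord u < ord v ∧ ord v < ord w :=
    ⟨u, v, w, he, h1, h2⟩
  have hsp := hex.choose_spec.choose_spec.choose_spec
  have hst : sortTrip ord e =
      (hex.choose, hex.choose_spec.choose, hex.choose_spec.choose_spec.choose) := by
    rw [sortTrip, dif_pos hex]
  obtain ⟨q1, q2, q3⟩ := sorted_unique (he.symm.trans hsp.1) h1 h2 hsp.2.1 hsp.2.2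
  rw [Fmap, hst]
  subst q1; subst q2; subst q3
  rfl

lemma edge_sorted {H : ThreeGraph} {ord : ℕ → ℕ} (hinj : Set.InjOn ord ↑H.verts)
    {e : Finset ℕ} (he : e ∈ H.edges) :
    ∃ u v w : ℕ, e = ({u, v, w} : Finset ℕ) ∧ ord u < ord v ∧ ord v < ord w :=
  exists_sorted ord (H.card_eq e he) (fun a ha b hb hab =>
    hinj (Finset.mem_coe.mpr (H.subset_verts e he ha))
      (Finset.mem_coe.mpr (H.subset_verts e he hb)) hab)

lemma tripleSet_eq {H : ThreeGraph} {ord : ℕ → ℕ} {f : Finset ℕ → ℕ}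
    (hinj : Set.InjOn ord ↑H.verts) {E' : Finset (Finset ℕ)} (hsub : E' ⊆ H.edges) :
    {p : ℕ × ℕ × ℕ | ∃ e ∈ E', ∃ u v w : ℕ,
      e = ({u, v, w} : Finset ℕ) ∧ ord u < ord v ∧ ord v < ord w ∧
      p = (f {u, v}, f {v, w}, f {u, w})} = ↑(E'.image (Fmap ord f)) := by
  ext p
  simp only [Set.mem_setOf_eq, Finset.coe_image, Set.mem_image, Finset.mem_coe]
  constructor
  · rintro ⟨e, heE, u, v, w, hrep, h1, h2, rfl⟩
    exact ⟨e, heE, Fmap_eq ord f hrep h1 h2⟩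
  · rintro ⟨e, heE, rfl⟩
    obtain ⟨u, v, w, hrep, h1, h2⟩ := edge_sorted hinj (hsub heE)
    exact ⟨e, heE, u, v, w, hrep, h1, h2, Fmap_eq ord f hrep h1 h2⟩

lemma imageEdges_eq {H : ThreeGraph} {ord : ℕ → ℕ} {f : Finset ℕ → ℕ}
    (hinj : Set.InjOn ord ↑H.verts) {E' : Finset (Finset ℕ)} (hsub : E' ⊆ H.edges) :
    imageEdges ord f E' = (E'.image (Fmap ord f)).card := by
  rw [imageEdges, tripleSet_eq hinj hsub, Set.ncard_coe_finset]

lemma shadow_image_eq {H : ThreeGraph} {ord : ℕ → ℕ} {f : Finset ℕ → ℕ}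
    (hinj : Set.InjOn ord ↑H.verts) {E' : Finset (Finset ℕ)} (hsub : E' ⊆ H.edges) :
    (shadowOf E').image f =
      (E'.image (Fmap ord f)).biUnion (fun t => ({t.1, t.2.1, t.2.2} : Finset ℕ)) := by
  ext x
  simp only [Finset.mem_image, Finset.mem_biUnion, shadowOf]
  constructor
  · rintro ⟨p, ⟨e, heE, hp⟩, rfl⟩
    obtain ⟨u, v, w, hrep, h1, h2⟩ := edge_sorted hinj (hsub heE)
    have huv : u ≠ v := by rintro rfl; omega
    have hvw : v ≠ w := by rintro rfl; omega
    have huw : u ≠ w := by rintro rfl; omega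
    rw [hrep, powersetCard_two_triple huv hvw huw] at hp
    refine ⟨Fmap ord f e, ⟨e, heE, rfl⟩, ?_⟩
    rw [Fmap_eq ord f hrep h1 h2]
    simp only [Finset.mem_insert, Finset.mem_singleton] at hp ⊢
    rcases hp with rfl | rfl | rfl
    · exact Or.inl rfl
    · exact Or.inr (Or.inl rfl)
    · exact Or.inr (Or.inr rfl)
  · rintro ⟨t, ⟨e, heE, rfl⟩, hx⟩
    obtain ⟨u, v, w, hrep, h1, h2⟩ := edge_sorted hinj (hsub heE)
    have huv : u ≠ v := by rintro rfl; omega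
    have hvw : v ≠ w := by rintro rfl; omega
    have huw : u ≠ w := by rintro rfl; omega
    rw [Fmap_eq ord f hrep h1 h2] at hx
    simp only [Finset.mem_insert, Finset.mem_singleton] at hx
    have hmem : ∀ p ∈ ({({u,v} : Finset ℕ), {v,w}, {u,w}} : Finset (Finset ℕ)),
        ∃ a ∈ E', p ∈ a.powersetCard 2 := by
      intro p hp
      exact ⟨e, heE, by rw [hrep, powersetCard_two_triple huv hvw huw]; exact hp⟩
    rcases hx with rfl | rfl | rfl
    · exact ⟨{u, v}, hmem _ (by simp), rfl⟩
    · exact ⟨{v, w}, hmem _ (by simp), rfl⟩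
    · exact ⟨{u, w}, hmem _ (by simp), rfl⟩

lemma bounds {H : ThreeGraph} {ord : ℕ → ℕ} {E : Set (ℕ × ℕ × ℕ)} {f : Finset ℕ → ℕ}
    (hph : IsPairHom H ord E f) {E' : Finset (Finset ℕ)}
    (hsub : E' ⊆ H.edges) (hne' : E'.Nonempty) :
    1 ≤ imageEdges ord f E' ∧ imageEdges ord f E' ≤ E'.card ∧
    1 ≤ imageVerts f E' ∧ imageVerts f E' ≤ 3 * imageEdges ord f E' := by
  have hinj := hph.1
  rw [imageEdges_eq hinj hsub, imageVerts, shadow_image_eq hinj hsub]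
  refine ⟨Finset.card_pos.mpr (hne'.image _), Finset.card_image_le, ?_, ?_⟩
  · obtain ⟨e, heE⟩ := hne'
    exact Finset.card_pos.mpr ⟨(Fmap ord f e).1,
      Finset.mem_biUnion.mpr ⟨Fmap ord f e, Finset.mem_image_of_mem _ heE, by simp⟩⟩
  · refine Finset.card_biUnion_le.trans ?_
    refine le_trans (Finset.sum_le_sum (fun t _ => card_triple_le)) ?_
    rw [Finset.sum_const, smul_eq_mul, mul_comm]

lemma disjoint_of_card {T : Finset (ℕ × ℕ × ℕ)}
    (h3 : ∀ t ∈ T, ({t.1, t.2.1, t.2.2} : Finset ℕ).card = 3)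
    (hcard : 3 * T.card ≤ (T.biUnion (fun t => ({t.1, t.2.1, t.2.2} : Finset ℕ))).card)
    {t t' : ℕ × ℕ × ℕ} (ht : t ∈ T) (ht' : t' ∈ T) (hnet : t ≠ t') :
    Disjoint ({t.1, t.2.1, t.2.2} : Finset ℕ) ({t'.1, t'.2.1, t'.2.2} : Finset ℕ) := by
  classical
  by_contra hd
  rw [Finset.not_disjoint_iff] at hd
  obtain ⟨x, hx1, hx2⟩ := hd
  have hxR : x ∈ (T.erase t).biUnion (fun s => ({s.1, s.2.1, s.2.2} : Finset ℕ)) :=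
    Finset.mem_biUnion.mpr ⟨t', Finset.mem_erase.mpr ⟨Ne.symm hnet, ht'⟩, hx2⟩
  have hb : T.biUnion (fun s => ({s.1, s.2.1, s.2.2} : Finset ℕ)) =
      ({t.1, t.2.1, t.2.2} : Finset ℕ) ∪
        (T.erase t).biUnion (fun s => ({s.1, s.2.1, s.2.2} : Finset ℕ)) := by
    conv_lhs => rw [← Finset.insert_erase ht]
    rw [Finset.biUnion_insert]
  have hsubU : ({t.1, t.2.1, t.2.2} : Finset ℕ) ∪
      (T.erase t).biUnion (fun s => ({s.1, s.2.1, s.2.2} : Finset ℕ)) ⊆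
      (({t.1, t.2.1, t.2.2} : Finset ℕ).erase x) ∪
      (T.erase t).biUnion (fun s => ({s.1, s.2.1, s.2.2} : Finset ℕ)) := by
    intro y hy
    rcases Finset.mem_union.mp hy with h | h
    · by_cases hxy : y = x
      · exact Finset.mem_union_right _ (hxy ▸ hxR)
      · exact Finset.mem_union_left _ (Finset.mem_erase.mpr ⟨hxy, h⟩)
    · exact Finset.mem_union_right _ h
  have hR : ((T.erase t).biUnion (fun s => ({s.1, s.2.1, s.2.2} : Finset ℕ))).card ≤
      3 * (T.erase t).card := by
    refine Finset.card_biUnion_le.trans ?_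
    refine le_trans (Finset.sum_le_sum (fun u hu => (h3 u (Finset.mem_of_mem_erase hu)).le)) ?_
    rw [Finset.sum_const, smul_eq_mul, mul_comm]
  have he1 : (({t.1, t.2.1, t.2.2} : Finset ℕ).erase x).card = 2 := by
    rw [Finset.card_erase_of_mem hx1, h3 t ht]
  have hchain : (T.biUnion (fun s => ({s.1, s.2.1, s.2.2} : Finset ℕ))).card ≤
      2 + 3 * (T.erase t).card := by
    rw [hb]
    refine le_trans (Finset.card_le_card hsubU) ?_
    refine le_trans (Finset.card_union_le _ _) ?_
    omega
  have h4 : (T.erase t).card = T.card - 1 := Finset.card_erase_of_mem ht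
  have h5 : 1 ≤ T.card := Finset.card_pos.mpr ⟨t, ht⟩
  omega

lemma third_le_ratio {e v : ℕ} (he : 1 ≤ e) (hv : 1 ≤ v) (h : v ≤ 3 * e) :
    (1 : ℝ) / 3 ≤ (e : ℝ) / (v : ℝ) := by
  have hv' : (0 : ℝ) < v := by exact_mod_cast hv
  rw [div_le_div_iff₀ (by norm_num) hv']
  have h' : (v : ℝ) ≤ 3 * e := by exact_mod_cast h
  linarith

lemma verts_eq_of_ratio {e v : ℕ} (he : 1 ≤ e) (hv : 1 ≤ v) (h : v ≤ 3 * e)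
    (hle : (e : ℝ) / (v : ℝ) ≤ 1 / 3) : v = 3 * e := by
  have hv' : (0 : ℝ) < v := by exact_mod_cast hv
  rw [div_le_div_iff₀ hv' (by norm_num)] at hle
  have h2 : 3 * e ≤ v := by exact_mod_cast (by linarith : (3 : ℝ) * e ≤ v)
  omega

/-- The set of ratios attained by a pair map. -/
noncomputable def ratioSet (H : ThreeGraph) (ord : ℕ → ℕ) (f : Finset ℕ → ℕ) : Set ℝ :=
  {r : ℝ | ∃ E' : Finset (Finset ℕ), E' ⊆ H.edges ∧ E'.Nonempty ∧
    r = (imageEdges ord f E' : ℝ) / (imageVerts f E' : ℝ)}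

lemma ratioSet_finite {H : ThreeGraph} {ord : ℕ → ℕ} {f : Finset ℕ → ℕ} :
    (ratioSet H ord f).Finite := by
  refine Set.Finite.subset (Set.Finite.image
    (fun E' => (imageEdges ord f E' : ℝ) / (imageVerts f E' : ℝ))
    (H.edges.powerset.finite_toSet)) ?_
  rintro r ⟨E', hsub, hne', rfl⟩
  exact ⟨E', Finset.mem_coe.mpr (Finset.mem_powerset.mpr hsub), rfl⟩

lemma ratioSet_nonempty {H : ThreeGraph} {ord : ℕ → ℕ} {f : Finset ℕ → ℕ}
    (hne : H.edges.Nonempty) : (ratioSet H ord f).Nonempty :=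
  ⟨_, H.edges, Finset.Subset.refl _, hne, rfl⟩

lemma third_le_of_mem {H : ThreeGraph} {ord : ℕ → ℕ} {E : Set (ℕ × ℕ × ℕ)}
    {f : Finset ℕ → ℕ} (hph : IsPairHom H ord E f) {r : ℝ}
    (hr : r ∈ ratioSet H ord f) : 1 / 3 ≤ r := by
  obtain ⟨E', hsub, hne', rfl⟩ := hr
  obtain ⟨b1, b2, b3, b4⟩ := bounds hph hsub hne'
  exact third_le_ratio b1 b3 b4

lemma third_le_sSup {H : ThreeGraph} {ord : ℕ → ℕ} {E : Set (ℕ × ℕ × ℕ)}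
    {f : Finset ℕ → ℕ} (hne : H.edges.Nonempty) (hph : IsPairHom H ord E f) :
    1 / 3 ≤ sSup (ratioSet H ord f) := by
  obtain ⟨r, hr⟩ := ratioSet_nonempty (ord := ord) (f := f) hne
  exact le_trans (third_le_of_mem hph hr) (le_csSup ratioSet_finite.bddAbove hr)

lemma mpair_set_def (H : ThreeGraph) :
    mpair H = sInf {q : ℝ | ∃ (ord : ℕ → ℕ) (E : Set (ℕ × ℕ × ℕ)) (f : Finset ℕ → ℕ),
      Oriented E ∧ IsPairHom H ord E f ∧ q = sSup (ratioSet H ord f)} := rfl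

lemma S_finite {H : ThreeGraph} (hne : H.edges.Nonempty) :
    {q : ℝ | ∃ (ord : ℕ → ℕ) (E : Set (ℕ × ℕ × ℕ)) (f : Finset ℕ → ℕ),
      Oriented E ∧ IsPairHom H ord E f ∧ q = sSup (ratioSet H ord f)}.Finite := by
  refine Set.Finite.subset (Set.Finite.image (fun p : ℕ × ℕ => (p.1 : ℝ) / (p.2 : ℝ))
    (((Finset.range (H.edges.card + 1)) ×ˢ
      (Finset.range (3 * H.edges.card + 1))).finite_toSet)) ?_
  rintro q ⟨ord, E, f, hor, hph, rfl⟩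
  have hmem := (ratioSet_nonempty (ord := ord) (f := f) hne).csSup_mem ratioSet_finite
  obtain ⟨E', hsub, hne', hq⟩ := hmem
  obtain ⟨b1, b2, b3, b4⟩ := bounds hph hsub hne'
  have hc : E'.card ≤ H.edges.card := Finset.card_le_card hsub
  refine ⟨(imageEdges ord f E', imageVerts f E'), ?_, hq.symm⟩
  rw [Finset.mem_coe, Finset.mem_product, Finset.mem_range, Finset.mem_range]
  exact ⟨by omega, by omega⟩

/-- A nonempty 3-graph `H` is 123-inducible iff `m_pair(H) = 1/3`. -/
theorem inducible123_iff_mpair_eq_third (H : ThreeGraph) (hne : H.edges.Nonempty) :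
    Inducible123 H ↔ mpair H = 1 / 3 := by
  classical
  have lower : ∀ q ∈ {q : ℝ | ∃ (ord : ℕ → ℕ) (E : Set (ℕ × ℕ × ℕ)) (f : Finset ℕ → ℕ),
      Oriented E ∧ IsPairHom H ord E f ∧ q = sSup (ratioSet H ord f)}, (1 : ℝ) / 3 ≤ q := by
    rintro q ⟨ord', E', f', hor', hph', rfl⟩
    exact third_le_sSup hne hph'
  constructor
  · rintro ⟨ord, lab, hinj, hlab⟩
    set f : Finset ℕ → ℕ := fun p => ((lab p : Fin 3) : ℕ) with hfdef
    set E₀ : Set (ℕ × ℕ × ℕ) := {((0 : ℕ), (1 : ℕ), (2 : ℕ))} with hE₀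
    have hOr : Oriented E₀ := by
      intro a b c habc
      rw [hE₀, Set.mem_singleton_iff, Prod.mk.injEq, Prod.mk.injEq] at habc
      obtain ⟨rfl, rfl, rfl⟩ := habc
      refine ⟨⟨by norm_num, by norm_num, by norm_num⟩, ?_, ?_, ?_, ?_, ?_⟩ <;>
        · rw [hE₀, Set.mem_singleton_iff]
          simp [Prod.ext_iff]
    have hph : IsPairHom H ord E₀ f := by
      refine ⟨hinj, ?_⟩
      intro e he u v w hrep h1 h2
      obtain ⟨l1, l2, l3⟩ := hlab e he u v w hrep h1 h2
      have e1 : f {u, v} = 0 := by rw [hfdef]; simp [l1]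
      have e2 : f {v, w} = 1 := by rw [hfdef]; simp [l2]
      have e3 : f {u, w} = 2 := by rw [hfdef]; simp [l3]
      rw [e1, e2, e3]
      exact ⟨⟨by norm_num, by norm_num, by norm_num⟩, rfl⟩
    have key : ∀ E' : Finset (Finset ℕ), E' ⊆ H.edges → E'.Nonempty →
        E'.image (Fmap ord f) = {((0 : ℕ), (1 : ℕ), (2 : ℕ))} := by
      intro E' hsub hne'
      rw [Finset.eq_singleton_iff_nonempty_unique_mem]
      refine ⟨hne'.image _, ?_⟩
      intro t ht
      rw [Finset.mem_image] at ht
      obtain ⟨e, heE, rfl⟩ := ht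
      obtain ⟨u, v, w, hrep, h1, h2⟩ := edge_sorted hinj (hsub heE)
      rw [Fmap_eq ord _ hrep h1 h2]
      obtain ⟨l1, l2, l3⟩ := hlab e (hsub heE) u v w hrep h1 h2
      rw [hfdef]
      simp [l1, l2, l3]
    have hratio : ∀ E' : Finset (Finset ℕ), E' ⊆ H.edges → E'.Nonempty →
        (imageEdges ord f E' : ℝ) / (imageVerts f E' : ℝ) = 1 / 3 := by
      intro E' hsub hne'
      have h1 : imageEdges ord f E' = 1 := by
        rw [imageEdges_eq hinj hsub, key E' hsub hne', Finset.card_singleton]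
      have h2 : imageVerts f E' = 3 := by
        rw [imageVerts, shadow_image_eq hinj hsub, key E' hsub hne',
          Finset.singleton_biUnion]
        rfl
      rw [h1, h2]
      norm_num
    have hR : ratioSet H ord f = {(1 : ℝ) / 3} := by
      ext r
      simp only [ratioSet, Set.mem_setOf_eq, Set.mem_singleton_iff]
      constructor
      · rintro ⟨E', hsub, hne', rfl⟩
        exact hratio E' hsub hne'
      · rintro rfl
        exact ⟨H.edges, Finset.Subset.refl _, hne, (hratio _ (Finset.Subset.refl _) hne).symm⟩
    have hmem : (1 : ℝ) / 3 ∈ {q : ℝ | ∃ (ord : ℕ → ℕ) (E : Set (ℕ × ℕ × ℕ))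
        (f : Finset ℕ → ℕ), Oriented E ∧ IsPairHom H ord E f ∧
        q = sSup (ratioSet H ord f)} :=
      ⟨ord, E₀, f, hOr, hph, by rw [hR, csSup_singleton]⟩
    rw [mpair_set_def]
    exact le_antisymm (csInf_le ⟨1 / 3, lower⟩ hmem) (le_csInf ⟨_, hmem⟩ lower)
  · intro hm
    rw [mpair_set_def] at hm
    have hSne : {q : ℝ | ∃ (ord : ℕ → ℕ) (E : Set (ℕ × ℕ × ℕ)) (f : Finset ℕ → ℕ),
        Oriented E ∧ IsPairHom H ord E f ∧ q = sSup (ratioSet H ord f)}.Nonempty := by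
      by_contra h
      rw [Set.not_nonempty_iff_eq_empty] at h
      rw [h, Real.sInf_empty] at hm
      norm_num at hm
    have hmem := hSne.csInf_mem (S_finite hne)
    rw [hm] at hmem
    obtain ⟨ord, E, f, hor, hph, hq⟩ := hmem
    have hinj := hph.1
    have hrmem : ((imageEdges ord f H.edges : ℝ) / (imageVerts f H.edges : ℝ)) ∈
        ratioSet H ord f := ⟨H.edges, Finset.Subset.refl _, hne, rfl⟩
    have hle : (imageEdges ord f H.edges : ℝ) / (imageVerts f H.edges : ℝ) ≤ 1 / 3 := by
      rw [hq]
      exact le_csSup ratioSet_finite.bddAbove hrmem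
    obtain ⟨b1, b2, b3, b4⟩ := bounds hph (Finset.Subset.refl _) hne
    have hveq : imageVerts f H.edges = 3 * imageEdges ord f H.edges :=
      verts_eq_of_ratio b1 b3 b4 hle
    set T := H.edges.image (Fmap ord f) with hT
    have hE : imageEdges ord f H.edges = T.card := imageEdges_eq hinj (Finset.Subset.refl _)
    have hV : imageVerts f H.edges =
        (T.biUnion (fun t => ({t.1, t.2.1, t.2.2} : Finset ℕ))).card := by
      rw [imageVerts, shadow_image_eq hinj (Finset.Subset.refl _)]
    have h3 : ∀ t ∈ T, ({t.1, t.2.1, t.2.2} : Finset ℕ).card = 3 := by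
      intro t ht
      rw [hT, Finset.mem_image] at ht
      obtain ⟨e, heE, rfl⟩ := ht
      obtain ⟨u, v, w, hrep, h1, h2⟩ := edge_sorted hinj heE
      rw [Fmap_eq ord f hrep h1 h2]
      obtain ⟨⟨d1, d2, d3⟩, -⟩ := hph.2 e heE u v w hrep h1 h2
      exact card_triple_eq d1 d2 d3
    have hcard : 3 * T.card ≤ (T.biUnion (fun t => ({t.1, t.2.1, t.2.2} : Finset ℕ))).card := by
      rw [← hV, hveq, hE]
    have hdisj : ∀ t ∈ T, ∀ t' ∈ T, t ≠ t' →
        Disjoint ({t.1, t.2.1, t.2.2} : Finset ℕ) ({t'.1, t'.2.1, t'.2.2} : Finset ℕ) :=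
      fun t ht t' ht' hnet => disjoint_of_card h3 hcard ht ht' hnet
    refine ⟨ord, fun p => if ∃ t ∈ T, t.1 = f p then 0 else
      if ∃ t ∈ T, t.2.1 = f p then 1 else 2, hinj, ?_⟩
    intro e he u v w hrep h1 h2
    have ht : (f {u, v}, f {v, w}, f {u, w}) ∈ T := by
      rw [hT, Finset.mem_image]
      exact ⟨e, he, Fmap_eq ord f hrep h1 h2⟩
    obtain ⟨⟨d1, d2, d3⟩, -⟩ := hph.2 e he u v w hrep h1 h2
    have hnot : ∀ t' ∈ T, ∀ x : ℕ,
        x ∈ ({f {u, v}, f {v, w}, f {u, w}} : Finset ℕ) →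
        x ∈ ({t'.1, t'.2.1, t'.2.2} : Finset ℕ) → t' = (f {u, v}, f {v, w}, f {u, w}) := by
      intro t' ht' x hx1 hx2
      by_contra hne'
      exact (Finset.disjoint_left.mp (hdisj _ ht t' ht' (fun h => hne' h.symm)) hx1) hx2
    refine ⟨?_, ?_, ?_⟩
    · show (if ∃ t ∈ T, t.1 = f {u, v} then (0 : Fin 3) else
        if ∃ t ∈ T, t.2.1 = f {u, v} then 1 else 2) = 0
      rw [if_pos ⟨(f {u, v}, f {v, w}, f {u, w}), ht, rfl⟩]
    · have hc1 : ¬ ∃ t' ∈ T, t'.1 = f {v, w} := by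
        rintro ⟨t', ht', hteq⟩
        have heq := hnot t' ht' t'.1 (by rw [hteq]; simp) (by simp)
        rw [heq] at hteq
        exact d1 hteq
      show (if ∃ t ∈ T, t.1 = f {v, w} then (0 : Fin 3) else
        if ∃ t ∈ T, t.2.1 = f {v, w} then 1 else 2) = 1
      rw [if_neg hc1, if_pos ⟨(f {u, v}, f {v, w}, f {u, w}), ht, rfl⟩]
    · have hc1 : ¬ ∃ t' ∈ T, t'.1 = f {u, w} := by
        rintro ⟨t', ht', hteq⟩
        have heq := hnot t' ht' t'.1 (by rw [hteq]; simp) (by simp)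
        rw [heq] at hteq
        exact d3 hteq
      have hc2 : ¬ ∃ t' ∈ T, t'.2.1 = f {u, w} := by
        rintro ⟨t', ht', hteq⟩
        have heq := hnot t' ht' t'.2.1 (by rw [hteq]; simp) (by simp)
        rw [heq] at hteq
        exact d2 hteq
      show (if ∃ t ∈ T, t.1 = f {u, w} then (0 : Fin 3) else
        if ∃ t ∈ T, t.2.1 = f {u, w} then 1 else 2) = 2
      rw [if_neg hc1, if_neg hc2]
end

section
/- For every integer n ≥ 3, the link of the cycle satisfies m_pair(L_n^(3)) = 1/2 if n is odd, and m_pair(L_n^(3)) = 1/3 if n is even. -/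
/-- The link of the cycle, `L_n^{(3)}`: vertex set `{0,…,n-1} ∪ {n}` where `{0,…,n-1}` stands
for `ℤ/n` and `n` plays the rôle of the new center vertex `x`; edges `{x, k, k+1}` with
arithmetic modulo `n`. -/
def linkCycle (n : ℕ) : ThreeGraph where
  verts := insert n (Finset.range n)
  edges := ((insert n (Finset.range n)).powersetCard 3).filter (fun e =>
    ∃ k < n, e = ({n, k, (k + 1) % n} : Finset ℕ))
  card_eq := fun e he => (Finset.mem_powersetCard.mp (Finset.mem_filter.mp he).1).2
  subset_verts := fun e he => (Finset.mem_powersetCard.mp (Finset.mem_filter.mp he).1).1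

/-!
The lower bound `1/3` holds for every pair homomorphism: an edge of `f(H)` has at most three
vertices. An injective labelling of the pairs keeps every density at most `1/2`, since every
edge of `L_n` has its own rim pair `{k, k+1}` and its own spoke `{x, k}`. For even `n`, ordering
the cycle vertices so that `x` is the middle vertex of every edge lets all edges go to the single
triple `(0, 1, 2)`, which gives `1/3`.

For odd `n`, take any pair homomorphism. If the 3-graph of vertex sets of the image edges has a
Berge cycle of length `t`, its `t` edges span at most `2t` vertices, so the density is at least
`1/2`. Otherwise the incidence graph of the image is a forest, so the closed walk
`f(x0), S0, f(x1), S1, …` through the spoke images and the image edges uses every incidence an even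
number of times. By orientation, the position of a vertex inside an image edge depends only on the
incidence, so the number of steps at which the spoke image is the third coordinate `f(uw)` is even.
This number counts the edges in which `x` is not the middle vertex; the edges in which `x` is the
middle vertex are the sign changes of `ord k < ord x` around the cycle, again an even number.
Hence `n` is even.
-/

open Finset

theorem even_card_filter_not_iff_succ_iff (p : ℕ → Prop) [DecidablePred p] (m : ℕ) :
    Even #{j ∈ range m | ¬(p j ↔ p (j + 1))} ↔ (p m ↔ p 0) := by
  induction m with
  | zero => simp
  | succ m ih =>
    rw [range_add_one, filter_insert]
    by_cases hm : p m ↔ p (m + 1)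
    · rw [if_neg (not_not.2 hm), ih, hm]
    · rw [if_pos hm, card_insert_of_notMem (by simp), Nat.even_add_one, ih]
      tauto

theorem sum_range_two_mul {M : Type*} [AddCommMonoid M] (g : ℕ → M) (m : ℕ) :
    ∑ j ∈ range (2 * m), g j = ∑ k ∈ range m, (g (2 * k) + g (2 * k + 1)) := by
  induction m with
  | zero => simp
  | succ m ih =>
    rw [show 2 * (m + 1) = 2 * m + 1 + 1 by ring, sum_range_succ, sum_range_succ, ih,
      sum_range_succ, add_assoc]

theorem even_card_filter_of_even_card_fibers {α β : Type*} [DecidableEq β] (s : Finset α)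
    (g : α → β) (P : α → Prop) [DecidablePred P]
    (hP : ∀ a ∈ s, ∀ b ∈ s, g a = g b → (P a ↔ P b)) (hg : ∀ y, Even #{a ∈ s | g a = y}) :
    Even #{a ∈ s | P a} := by
  rw [card_eq_sum_card_image g]
  refine Finset.even_sum _ fun y hy => ?_
  obtain ⟨a, ha, rfl⟩ := mem_image.1 hy
  rw [mem_filter] at ha
  have hfiber : {b ∈ {a ∈ s | P a} | g b = g a} = {b ∈ s | g b = g a} := by
    ext b
    simp only [mem_filter]
    exact ⟨fun h => ⟨h.1.1, h.2⟩, fun h => ⟨⟨h.1, (hP a ha.1 b h.1 h.2.symm).1 ha.2⟩, h.2⟩⟩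
  rw [hfiber]
  exact hg (g a)

namespace SimpleGraph

theorem IsAcyclic.even_card_filter_sym2_eq {V : Type*} [DecidableEq V] {G : SimpleGraph V}
    (hG : G.IsAcyclic) {w : ℕ → V} {m : ℕ} (hw : ∀ j < m, G.Adj (w j) (w (j + 1)))
    (hclosed : w m = w 0) (e : Sym2 V) : Even #{j ∈ range m | s(w j, w (j + 1)) = e} := by
  classical
  induction e using Sym2.ind with | h u v =>
  by_cases huv : G.Adj u v
  · -- the walk changes side of the bridge `s(u, v)` exactly when it traverses it
    set G' := G.deleteEdges {s(u, v)}
    have hbridge : ¬G'.Reachable u v := isAcyclic_iff_forall_adj_isBridge.1 hG huv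
    have hcross : ∀ j < m, s(w j, w (j + 1)) = s(u, v) ↔
        ¬(G'.Reachable u (w j) ↔ G'.Reachable u (w (j + 1))) := by
      intro j hj
      constructor
      · intro h
        rcases Sym2.eq_iff.1 h with ⟨h1, h2⟩ | ⟨h1, h2⟩ <;> rw [h1, h2] <;> simp [hbridge]
      · intro h
        by_contra hne
        have hadj : G'.Adj (w j) (w (j + 1)) := by simp [G', hw j hj, hne]
        exact h ⟨fun hr => hr.trans hadj.reachable, fun hr => hr.trans hadj.symm.reachable⟩
    rw [filter_congr fun j hj => hcross j (mem_range.1 hj)]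
    exact (even_card_filter_not_iff_succ_iff (fun j => G'.Reachable u (w j)) m).2
      (by rw [hclosed])
  · rw [filter_eq_empty_iff.2 fun j hj h => huv ?_, card_empty]
    · exact .zero
    · rw [← G.mem_edgeSet, ← h]
      exact hw j (mem_range.1 hj)

end SimpleGraph

def incidenceGraph (S : Set (Finset ℕ)) : SimpleGraph (ℕ ⊕ Finset ℕ) where
  Adj
    | .inl v, .inr G => G ∈ S ∧ v ∈ G
    | .inr G, .inl v => G ∈ S ∧ v ∈ G
    | _, _ => False
  symm := ⟨by rintro (_ | _) (_ | _) h <;> exact h⟩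
  loopless := ⟨by rintro (_ | _) h <;> exact h⟩

section incidenceGraph

variable {S : Set (Finset ℕ)}

@[simp]
theorem incidenceGraph_adj_inl_inr {v : ℕ} {G : Finset ℕ} :
    (incidenceGraph S).Adj (.inl v) (.inr G) ↔ G ∈ S ∧ v ∈ G := .rfl

@[simp]
theorem incidenceGraph_adj_inr_inl {v : ℕ} {G : Finset ℕ} :
    (incidenceGraph S).Adj (.inr G) (.inl v) ↔ G ∈ S ∧ v ∈ G := .rfl

theorem incidenceGraph_adj_isLeft {x y : ℕ ⊕ Finset ℕ} (h : (incidenceGraph S).Adj x y) :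
    y.isLeft = !x.isLeft := by
  cases x <;> cases y <;> simp_all [incidenceGraph]

theorem hasBergeCycle_of_periodic_walk {t : ℕ} (ht : 2 ≤ t) {p : ℕ → ℕ ⊕ Finset ℕ}
    (hadj : ∀ j, (incidenceGraph S).Adj (p j) (p (j + 1)))
    (hinj : ∀ i j, p i = p j → i ≡ j [MOD 2 * t]) (hper : ∀ j, p (j % (2 * t)) = p j)
    (hp0 : (p 0).isLeft) : HasBergeCycle S := by
  have : NeZero t := ⟨by omega⟩
  have : Fact (1 < t) := ⟨by omega⟩
  have hflip : ∀ j, (p (j + 1)).isLeft = !(p j).isLeft := fun j =>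
    incidenceGraph_adj_isLeft (hadj j)
  have hleft : ∀ i, (p (2 * i)).isLeft := by
    intro i
    induction i with
    | zero => exact hp0
    | succ i ih => rw [show 2 * (i + 1) = 2 * i + 1 + 1 by ring, hflip, hflip, ih]; rfl
  have hright : ∀ i, (p (2 * i + 1)).isRight := fun i => by
    rw [← Sum.not_isLeft, hflip, hleft]; simp
  choose v hv using fun i : ZMod t => Sum.isLeft_iff.1 (hleft i.val)
  choose e he using fun i : ZMod t => Sum.isRight_iff.1 (hright i.val)
  have hidx : ∀ (i j : ZMod t) (a : ℕ), p (2 * i.val + a) = p (2 * j.val + a) → i = j := by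
    intro i j a h
    have h2 : 2 * i.val ≡ 2 * j.val [MOD 2 * t] := (hinj _ _ h).add_right_cancel' a
    exact ZMod.val_injective t ((Nat.ModEq.mul_left_cancel' two_ne_zero h2).eq_of_lt_of_lt
      i.val_lt j.val_lt)
  have hsucc : ∀ i : ZMod t, p (2 * (i + 1).val) = p (2 * i.val + 1 + 1) := fun i => by
    rw [ZMod.val_add, ZMod.val_one, ← Nat.mul_mod_mul_left, hper]
    ring_nf
  refine ⟨t, ht, v, e, fun i j h => hidx i j 0 (by simpa using (hv i).trans (h ▸ hv j).symm),
    fun i j h => hidx i j 1 ((he i).trans (h ▸ he j).symm), fun i => ?_⟩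
  have h1 := hadj (2 * i.val)
  have h2 := hadj (2 * i.val + 1)
  rw [hv i, he i] at h1
  rw [he i, ← hsucc, hv (i + 1)] at h2
  simp only [incidenceGraph_adj_inl_inr, incidenceGraph_adj_inr_inl] at h1 h2
  exact ⟨h1.1, h1.2, h2.2⟩

theorem isAcyclic_incidenceGraph_of_not_hasBergeCycle (hS : ¬HasBergeCycle S) :
    (incidenceGraph S).IsAcyclic := by
  intro x c hc
  apply hS
  set L := c.length
  have hL : 3 ≤ L := hc.three_le_length
  set q : ℕ → ℕ ⊕ Finset ℕ := fun j => c.getVert (j % L) with hq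
  have hadj : ∀ j, (incidenceGraph S).Adj (q j) (q (j + 1)) := by
    intro j
    have hr : j % L < L := Nat.mod_lt _ (by omega)
    have hnext : q (j + 1) = c.getVert (j % L + 1) := by
      simp only [hq, ← Nat.mod_add_mod j L 1]
      rcases Nat.lt_or_ge (j % L + 1) L with h | h
      · rw [Nat.mod_eq_of_lt h]
      · rw [show j % L + 1 = L by omega, Nat.mod_self, c.getVert_zero, c.getVert_length]
    rw [hnext]
    exact c.adj_getVert_succ hr
  have hinj : ∀ i j, q i = q j → i ≡ j [MOD L] := fun i j h =>
    hc.getVert_injOn' (by simp; have := Nat.mod_lt i (by omega : 0 < L); omega)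
      (by simp; have := Nat.mod_lt j (by omega : 0 < L); omega) h
  have hflip : ∀ j, (q (j + 1)).isLeft = !(q j).isLeft := fun j =>
    incidenceGraph_adj_isLeft (hadj j)
  -- the cycle alternates between elements and sets, so it has even length
  obtain ⟨t, hLt⟩ : Even L := by
    have := (even_card_filter_not_iff_succ_iff (fun j => (q j).isLeft) L).2
      (by simp [hq, Nat.mod_self])
    rwa [filter_true_of_mem fun j _ => by rw [hflip]; cases (q j).isLeft <;> simp,
      card_range] at this
  have hL2 : L = 2 * t := by omega
  obtain ⟨d, hd⟩ : ∃ d, (q d).isLeft := by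
    cases h : (q 0).isLeft
    · exact ⟨1, by rw [hflip 0, h]; rfl⟩
    · exact ⟨0, h⟩
  refine hasBergeCycle_of_periodic_walk (p := fun j => q (j + d)) (by omega)
    (fun j => by simpa only [add_right_comm] using hadj (j + d))
    (fun i j h => hL2 ▸ (hinj _ _ h).add_right_cancel' d) (fun j => ?_) (by simpa using hd)
  simp only [hq, ← hL2, Nat.mod_add_mod]

end incidenceGraph

section SortedTriple

variable {ord : ℕ → ℕ} {f : Finset ℕ → ℕ}

theorem eq_of_sorted_triple_eq {u v w u' v' w' : ℕ} (h : ({u, v, w} : Finset ℕ) = {u', v', w'})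
    (h1 : ord u < ord v) (h2 : ord v < ord w) (h1' : ord u' < ord v') (h2' : ord v' < ord w') :
    u = u' ∧ v = v' ∧ w = w' := by
  have hmem : ∀ x ∈ ({u', v', w'} : Finset ℕ), x = u ∨ x = v ∨ x = w := fun x hx => by
    rw [← h] at hx
    simpa using hx
  rcases hmem u' (by simp) with rfl | rfl | rfl <;>
    rcases hmem v' (by simp) with rfl | rfl | rfl <;>
    rcases hmem w' (by simp) with rfl | rfl | rfl <;> omega

theorem exists_sorted_triple {e : Finset ℕ} (he : #e = 3) (hord : Set.InjOn ord e) :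
    ∃ u v w, e = {u, v, w} ∧ ord u < ord v ∧ ord v < ord w := by
  obtain ⟨x, y, z, hxy, hxz, hyz, rfl⟩ := card_eq_three.1 he
  have hxy' : ord x ≠ ord y := fun h => hxy (hord (by simp) (by simp) h)
  have hxz' : ord x ≠ ord z := fun h => hxz (hord (by simp) (by simp) h)
  have hyz' : ord y ≠ ord z := fun h => hyz (hord (by simp) (by simp) h)
  rcases hxy'.lt_or_gt with h1 | h1 <;> rcases hxz'.lt_or_gt with h2 | h2 <;>
    rcases hyz'.lt_or_gt with h3 | h3 <;>
    first
    | omega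
    | exact ⟨x, y, z, rfl, by omega, by omega⟩
    | exact ⟨x, z, y, by ext; simp; tauto, by omega, by omega⟩
    | exact ⟨y, x, z, by ext; simp; tauto, by omega, by omega⟩
    | exact ⟨y, z, x, by ext; simp; tauto, by omega, by omega⟩
    | exact ⟨z, x, y, by ext; simp; tauto, by omega, by omega⟩
    | exact ⟨z, y, x, by ext; simp; tauto, by omega, by omega⟩

open Classical in
/-- The edge `(f uv, f vw, f uw)` of the image of a pair homomorphism coming from the edge
`e = {u, v, w}`, `ord u < ord v < ord w`. -/
noncomputable def edgeImage (ord : ℕ → ℕ) (f : Finset ℕ → ℕ) (e : Finset ℕ) : ℕ × ℕ × ℕ :=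
  if h : ∃ p : ℕ × ℕ × ℕ, e = {p.1, p.2.1, p.2.2} ∧ ord p.1 < ord p.2.1 ∧ ord p.2.1 < ord p.2.2
  then (f {h.choose.1, h.choose.2.1}, f {h.choose.2.1, h.choose.2.2}, f {h.choose.1, h.choose.2.2})
  else (0, 0, 0)

theorem edgeImage_eq {e : Finset ℕ} {u v w : ℕ} (he : e = {u, v, w}) (h1 : ord u < ord v)
    (h2 : ord v < ord w) : edgeImage ord f e = (f {u, v}, f {v, w}, f {u, w}) := by
  have hex : ∃ p : ℕ × ℕ × ℕ, e = {p.1, p.2.1, p.2.2} ∧ ord p.1 < ord p.2.1 ∧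
      ord p.2.1 < ord p.2.2 := ⟨(u, v, w), he, h1, h2⟩
  obtain ⟨hp, hp1, hp2⟩ := hex.choose_spec
  obtain ⟨hu, hv, hw⟩ := eq_of_sorted_triple_eq (hp.symm.trans he) hp1 hp2 h1 h2
  rw [edgeImage, dif_pos hex, hu, hv, hw]

def tripleSet (p : ℕ × ℕ × ℕ) : Finset ℕ := {p.1, p.2.1, p.2.2}

theorem card_tripleSet_le (p : ℕ × ℕ × ℕ) : #(tripleSet p) ≤ 3 :=
  card_le_three

theorem tripleSet_edgeImage {e : Finset ℕ} (he : #e = 3) (hord : Set.InjOn ord e) :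
    tripleSet (edgeImage ord f e) = (e.powersetCard 2).image f := by
  obtain ⟨u, v, w, rfl, h1, h2⟩ := exists_sorted_triple he hord
  have huv : u ≠ v := by rintro rfl; omega
  have huw : u ≠ w := by rintro rfl; omega
  have hvw : v ≠ w := by rintro rfl; omega
  rw [edgeImage_eq rfl h1 h2, powersetCard_succ_insert (by simp [huv, huw]),
    powersetCard_succ_insert (by simp [hvw]), powersetCard_eq_empty.2 (by simp)]
  ext
  simp [tripleSet, powersetCard_one]

/-- The third coordinate of an image edge is the image of the outer pair `{min, max}`: it is the
image of one of the two pairs through `x` if `x` is extreme, and of neither if `x` is the middle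
vertex. -/
theorem outer_pair_through_count {x y z : ℕ} (hxy : ord x ≠ ord y) (hxz : ord x ≠ ord z)
    (hyz : ord y ≠ ord z)
    (hdist : ∀ u v w, ({x, y, z} : Finset ℕ) = {u, v, w} → ord u < ord v → ord v < ord w →
      f {u, v} ≠ f {u, w} ∧ f {v, w} ≠ f {u, w}) :
    ((if f {x, y} = (edgeImage ord f {x, y, z}).2.2 then 1 else 0) +
      if f {x, z} = (edgeImage ord f {x, y, z}).2.2 then 1 else 0) =
      if (ord y < ord x ↔ ord z < ord x) then 1 else 0 := by
  have hinj : Set.InjOn ord ({x, y, z} : Finset ℕ) := by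
    intro a ha b hb hab
    simp only [coe_insert, coe_singleton, Set.mem_insert_iff, Set.mem_singleton_iff] at ha hb
    rcases ha with rfl | rfl | rfl <;> rcases hb with rfl | rfl | rfl <;> first | rfl | omega
  have hcard : #({x, y, z} : Finset ℕ) = 3 :=
    card_eq_three.2 ⟨x, y, z, ne_of_apply_ne ord hxy, ne_of_apply_ne ord hxz,
      ne_of_apply_ne ord hyz, rfl⟩
  obtain ⟨u, v, w, he, h1, h2⟩ := exists_sorted_triple hcard hinj
  have hd := hdist u v w he h1 h2
  rw [edgeImage_eq he h1 h2]
  have hmem : ∀ a ∈ ({x, y, z} : Finset ℕ), a = u ∨ a = v ∨ a = w := fun a ha => by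
    rw [he] at ha
    simpa using ha
  have h3 := h1.trans h2
  rcases hmem x (by simp) with rfl | rfl | rfl <;> rcases hmem y (by simp) with rfl | rfl | rfl <;>
    rcases hmem z (by simp) with rfl | rfl | rfl <;>
    first
    | omega
    | (simp only [pair_comm] at hd ⊢
       simp [hd.1, hd.2, h1, h2, h3, not_lt.2 h1.le, not_lt.2 h2.le, not_lt.2 h3.le])

end SortedTriple

section PairHom

variable {H : ThreeGraph} {ord : ℕ → ℕ} {E : Set (ℕ × ℕ × ℕ)} {f : Finset ℕ → ℕ}

theorem injOn_of_mem_edges (hord : Set.InjOn ord H.verts) {e : Finset ℕ} (he : e ∈ H.edges) :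
    Set.InjOn ord e :=
  hord.mono (by exact_mod_cast H.subset_verts e he)

theorem exists_sorted_of_mem_edges (hord : Set.InjOn ord H.verts) {e : Finset ℕ}
    (he : e ∈ H.edges) : ∃ u v w, e = {u, v, w} ∧ ord u < ord v ∧ ord v < ord w :=
  exists_sorted_triple (H.card_eq e he) (injOn_of_mem_edges hord he)

theorem tripleSet_edgeImage_of_mem_edges (hord : Set.InjOn ord H.verts) {e : Finset ℕ}
    (he : e ∈ H.edges) : tripleSet (edgeImage ord f e) = (e.powersetCard 2).image f :=
  tripleSet_edgeImage (H.card_eq e he) (injOn_of_mem_edges hord he)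

theorem imageEdges_eq_card_image (hord : Set.InjOn ord H.verts) {E' : Finset (Finset ℕ)}
    (hE' : E' ⊆ H.edges) : imageEdges ord f E' = #(E'.image (edgeImage ord f)) := by
  rw [imageEdges, ← Set.ncard_coe_finset]
  congr 1
  ext p
  simp only [coe_image, Set.mem_image, mem_coe]
  constructor
  · rintro ⟨e, he, u, v, w, hdec, h1, h2, rfl⟩
    exact ⟨e, he, edgeImage_eq hdec h1 h2⟩
  · rintro ⟨e, he, rfl⟩
    obtain ⟨u, v, w, hdec, h1, h2⟩ := exists_sorted_of_mem_edges hord (hE' he)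
    exact ⟨e, he, u, v, w, hdec, h1, h2, edgeImage_eq hdec h1 h2⟩

theorem pair_mem_shadowOf {E' : Finset (Finset ℕ)} {e : Finset ℕ} (he : e ∈ E') {a b : ℕ}
    (ha : a ∈ e) (hb : b ∈ e) (hab : a ≠ b) : {a, b} ∈ shadowOf E' :=
  mem_biUnion.2 ⟨e, he, mem_powersetCard.2 ⟨by simp [insert_subset_iff, ha, hb], card_pair hab⟩⟩

theorem imageVerts_eq_card_biUnion (hord : Set.InjOn ord H.verts) {E' : Finset (Finset ℕ)}
    (hE' : E' ⊆ H.edges) :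
    imageVerts f E' = #(E'.biUnion fun e => tripleSet (edgeImage ord f e)) := by
  rw [imageVerts, shadowOf, biUnion_image]
  congr 1
  exact biUnion_congr rfl fun e he => (tripleSet_edgeImage_of_mem_edges hord (hE' he)).symm

theorem IsPairHom.edgeImage_mem (hf : IsPairHom H ord E f) {e : Finset ℕ} (he : e ∈ H.edges) :
    edgeImage ord f e ∈ E := by
  obtain ⟨u, v, w, hdec, h1, h2⟩ := exists_sorted_of_mem_edges hf.1 he
  rw [edgeImage_eq hdec h1 h2]
  exact (hf.2 e he u v w hdec h1 h2).2

theorem isPairHom_of_edgeImage_mem (hE : Oriented E) (hord : Set.InjOn ord H.verts)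
    (h : ∀ e ∈ H.edges, edgeImage ord f e ∈ E) : IsPairHom H ord E f := by
  refine ⟨hord, fun e he u v w hdec h1 h2 => ?_⟩
  have hmem := h e he
  rw [edgeImage_eq hdec h1 h2] at hmem
  exact ⟨(hE _ _ _ hmem).1, hmem⟩

theorem Oriented.eq_of_tripleSet_eq (hE : Oriented E) {p q : ℕ × ℕ × ℕ} (hp : p ∈ E)
    (hq : q ∈ E) (h : tripleSet p = tripleSet q) : p = q := by
  obtain ⟨a, b, c⟩ := p
  obtain ⟨a', b', c'⟩ := q
  obtain ⟨-, h1, h2, h3, h4, h5⟩ := hE a b c hp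
  obtain ⟨⟨hab', hbc', hac'⟩, -⟩ := hE a' b' c' hq
  have hmem : ∀ x ∈ ({a', b', c'} : Finset ℕ), x = a ∨ x = b ∨ x = c := fun x hx => by
    rw [tripleSet, tripleSet] at h
    rw [← h] at hx
    simpa using hx
  rcases hmem a' (by simp) with rfl | rfl | rfl <;>
    rcases hmem b' (by simp) with rfl | rfl | rfl <;>
    rcases hmem c' (by simp) with rfl | rfl | rfl <;> first | rfl | omega | contradiction

theorem oriented_image_edgeImage (hord : Set.InjOn ord H.verts) (hf : Function.Injective f) :
    Oriented (edgeImage ord f '' H.edges) := by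
  rintro a b c ⟨e, he, hp⟩
  -- an edge of the image determines the edge of `H` it comes from, hence its orientation
  have key : ∀ q ∈ edgeImage ord f '' H.edges, tripleSet q = tripleSet (a, b, c) →
      q = (a, b, c) := by
    rintro q ⟨e', he', rfl⟩ hq
    rw [← hp, tripleSet_edgeImage_of_mem_edges hord he',
      tripleSet_edgeImage_of_mem_edges hord he] at hq
    rw [← hp, eq_of_powersetCard_eq ((H.card_eq e' he').trans (H.card_eq e he).symm) two_ne_zero
      (by rw [H.card_eq e' he']; norm_num) (image_injective hf hq)]
  obtain ⟨u, v, w, hdec, h1, h2⟩ := exists_sorted_of_mem_edges hord he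
  rw [edgeImage_eq hdec h1 h2, Prod.mk.injEq, Prod.mk.injEq] at hp
  obtain ⟨rfl, rfl, rfl⟩ := hp
  have huv : u ≠ v := by rintro rfl; omega
  have huw : u ≠ w := by rintro rfl; omega
  have hvw : v ≠ w := by rintro rfl; omega
  have hne : f {u, v} ≠ f {v, w} ∧ f {v, w} ≠ f {u, w} ∧ f {u, v} ≠ f {u, w} :=
    ⟨hf.ne (ne_of_mem_of_not_mem' (mem_insert_self u _) (by simp [huv, huw])),
      hf.ne (ne_of_mem_of_not_mem' (mem_insert_self v _) (by simp [huv.symm, hvw])),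
      hf.ne (ne_of_mem_of_not_mem' (mem_insert_of_mem (mem_singleton_self v))
        (by simp [huv.symm, hvw]))⟩
  refine ⟨hne, ?_, ?_, ?_, ?_, ?_⟩ <;> intro hq <;>
    have := key _ hq (by ext; simp only [tripleSet, mem_insert, mem_singleton]; tauto) <;>
    simp only [Prod.mk.injEq] at this <;> tauto

end PairHom

section Density

variable {H : ThreeGraph} {ord : ℕ → ℕ} {E : Set (ℕ × ℕ × ℕ)} {f : Finset ℕ → ℕ}

noncomputable def imageDensity (ord : ℕ → ℕ) (f : Finset ℕ → ℕ) (E' : Finset (Finset ℕ)) : ℝ :=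
  (imageEdges ord f E' : ℝ) / (imageVerts f E' : ℝ)

theorem mpair_le (hE : Oriented E) (hf : IsPairHom H ord E f) {c : ℝ} (hc : 0 ≤ c)
    (h : ∀ E' ⊆ H.edges, E'.Nonempty → imageDensity ord f E' ≤ c) : mpair H ≤ c := by
  refine csInf_le_of_le ⟨0, ?_⟩ ⟨ord, E, f, hE, hf, rfl⟩ (Real.sSup_le ?_ hc)
  · rintro q ⟨ord, E, f, -, -, rfl⟩
    exact Real.sSup_nonneg (by rintro r ⟨E', -, -, rfl⟩; positivity)
  · rintro r ⟨E', hE', hne, rfl⟩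
    exact h E' hE' hne

theorem le_mpair {c : ℝ} (hne : ∃ ord E f, Oriented E ∧ IsPairHom H ord E f)
    (h : ∀ ord E f, Oriented E → IsPairHom H ord E f →
      ∃ E' ⊆ H.edges, E'.Nonempty ∧ c ≤ imageDensity ord f E') : c ≤ mpair H := by
  obtain ⟨ord, E, f, hE, hf⟩ := hne
  refine le_csInf ⟨_, ord, E, f, hE, hf, rfl⟩ ?_
  rintro q ⟨ord, E, f, hE, hf, rfl⟩
  obtain ⟨E', hE', hne, hc⟩ := h ord E f hE hf
  have hbdd : BddAbove {r : ℝ | ∃ E' : Finset (Finset ℕ), E' ⊆ H.edges ∧ E'.Nonempty ∧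
      r = (imageEdges ord f E' : ℝ) / (imageVerts f E' : ℝ)} := by
    refine ((H.edges.powerset.finite_toSet.image (imageDensity ord f)).subset ?_).bddAbove
    rintro r ⟨E', hE', -, rfl⟩
    exact ⟨E', mem_powerset.2 hE', rfl⟩
  exact hc.trans (le_csSup hbdd ⟨E', hE', hne, rfl⟩)

theorem third_le_imageDensity (hord : Set.InjOn ord H.verts) {E' : Finset (Finset ℕ)}
    (hE' : E' ⊆ H.edges) (hne : E'.Nonempty) : 1 / 3 ≤ imageDensity ord f E' := by
  rw [imageDensity, imageEdges_eq_card_image hord hE', imageVerts_eq_card_biUnion hord hE']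
  have hpos : 0 < #(E'.biUnion fun e => tripleSet (edgeImage ord f e)) :=
    card_pos.2 (hne.biUnion fun e _ => ⟨_, mem_insert_self _ _⟩)
  have hle : #(E'.biUnion fun e => tripleSet (edgeImage ord f e)) ≤
      #(E'.image (edgeImage ord f)) * 3 := by
    rw [← image_biUnion]
    exact card_biUnion_le_card_mul _ _ _ fun p _ => card_tripleSet_le p
  rw [div_le_div_iff₀ (by norm_num) (by exact_mod_cast hpos)]
  exact_mod_cast (by omega : _ ≤ _)

theorem card_biUnion_le_two_mul {t : ℕ} [NeZero t] (ht : 2 ≤ t) {v : ZMod t → ℕ}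
    {e : ZMod t → Finset ℕ} (hv : Function.Injective v) (hcard : ∀ i, #(e i) ≤ 3)
    (hmem : ∀ i, v i ∈ e i ∧ v (i + 1) ∈ e i) : #(univ.biUnion e) ≤ 2 * t := by
  have : Fact (1 < t) := ⟨by omega⟩
  -- `v (i + 1)` is counted again in `e (i + 1)`
  have hsub : univ.biUnion e ⊆ univ.biUnion fun i => (e i).erase (v (i + 1)) := by
    intro x hx
    obtain ⟨i, -, hx⟩ := mem_biUnion.1 hx
    by_cases hxi : x = v (i + 1)
    · refine mem_biUnion.2 ⟨i + 1, mem_univ _, mem_erase.2 ⟨fun h => ?_, hxi ▸ (hmem _).1⟩⟩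
      have := hv (hxi.symm.trans h)
      simp at this
    · exact mem_biUnion.2 ⟨i, mem_univ _, mem_erase.2 ⟨hxi, hx⟩⟩
  calc #(univ.biUnion e) ≤ #(univ.biUnion fun i => (e i).erase (v (i + 1))) := card_le_card hsub
    _ ≤ #(univ : Finset (ZMod t)) * 2 := card_biUnion_le_card_mul _ _ _ fun i _ => by
        rw [card_erase_of_mem (hmem i).2]
        have := hcard i
        omega
    _ = 2 * t := by rw [card_univ, ZMod.card, mul_comm]

def imageSets (H : ThreeGraph) (ord : ℕ → ℕ) (f : Finset ℕ → ℕ) : Set (Finset ℕ) :=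
  (fun e => tripleSet (edgeImage ord f e)) '' H.edges

theorem exists_half_le_imageDensity_of_hasBergeCycle (hord : Set.InjOn ord H.verts)
    (h : HasBergeCycle (imageSets H ord f)) :
    ∃ E' ⊆ H.edges, E'.Nonempty ∧ 1 / 2 ≤ imageDensity ord f E' := by
  obtain ⟨t, ht, v, e, hv, he, hcyc⟩ := h
  have : NeZero t := ⟨by omega⟩
  choose g hg hge using fun i => (hcyc i).1
  simp only at hge
  have hsub : univ.image g ⊆ H.edges := fun x hx => by
    obtain ⟨i, -, rfl⟩ := mem_image.1 hx
    exact hg i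
  refine ⟨univ.image g, hsub, univ_nonempty.image _, ?_⟩
  rw [imageDensity, imageEdges_eq_card_image hord hsub, imageVerts_eq_card_biUnion hord hsub,
    image_image, image_biUnion]
  rw [show (fun i => tripleSet (edgeImage ord f (g i))) = e from funext hge]
  have hE : #(univ.image (edgeImage ord f ∘ g)) = t := by
    rw [card_image_of_injective _ fun i j hij =>
      he (by rw [← hge, ← hge]; exact congrArg tripleSet hij), card_univ, ZMod.card]
  have hV : #(univ.biUnion e) ≤ 2 * t :=
    card_biUnion_le_two_mul ht hv (fun i => hge i ▸ card_tripleSet_le _) fun i => (hcyc i).2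
  have hpos : 0 < #(univ.biUnion e) :=
    card_pos.2 ⟨v 0, mem_biUnion.2 ⟨0, mem_univ _, (hcyc 0).2.1⟩⟩
  rw [hE, div_le_div_iff₀ (by norm_num) (by exact_mod_cast hpos)]
  exact_mod_cast (by omega : _ ≤ _)

end Density

section LinkCycle

variable {n : ℕ} {ord : ℕ → ℕ} {E : Set (ℕ × ℕ × ℕ)} {f : Finset ℕ → ℕ}

def linkEdge (n k : ℕ) : Finset ℕ := {n, k, (k + 1) % n}

theorem succ_mod_cases {k : ℕ} (hk : k < n) :
    (k + 1 < n ∧ (k + 1) % n = k + 1) ∨ (k + 1 = n ∧ (k + 1) % n = 0) := by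
  rcases Nat.lt_or_ge (k + 1) n with h | h
  · exact .inl ⟨h, Nat.mod_eq_of_lt h⟩
  · exact .inr ⟨by omega, by rw [show k + 1 = n by omega, Nat.mod_self]⟩

theorem card_linkEdge (hn : 2 ≤ n) {k : ℕ} (hk : k < n) : #(linkEdge n k) = 3 :=
  card_eq_three.2 ⟨n, k, (k + 1) % n, by omega, by have := succ_mod_cases hk; omega,
    by have := succ_mod_cases hk; omega, rfl⟩

theorem mem_linkCycle_edges (hn : 2 ≤ n) {e : Finset ℕ} :
    e ∈ (linkCycle n).edges ↔ ∃ k < n, e = linkEdge n k := by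
  simp only [linkCycle, mem_filter, mem_powersetCard]
  refine ⟨fun h => h.2, fun ⟨k, hk, he⟩ => ⟨⟨?_, he ▸ card_linkEdge hn hk⟩, k, hk, he⟩⟩
  have := succ_mod_cases hk
  intro x hx
  simp only [he, linkEdge, mem_insert, mem_singleton] at hx
  simp only [mem_insert, mem_range]
  omega

theorem linkEdge_mem_edges (hn : 2 ≤ n) {k : ℕ} (hk : k < n) :
    linkEdge n k ∈ (linkCycle n).edges :=
  (mem_linkCycle_edges hn).2 ⟨k, hk, rfl⟩

theorem eq_image_linkEdge (hn : 2 ≤ n) {E' : Finset (Finset ℕ)}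
    (hE' : E' ⊆ (linkCycle n).edges) :
    E' = {k ∈ range n | linkEdge n k ∈ E'}.image (linkEdge n) := by
  ext e
  simp only [mem_image, mem_filter, mem_range]
  constructor
  · intro he
    obtain ⟨k, hk, rfl⟩ := (mem_linkCycle_edges hn).1 (hE' he)
    exact ⟨k, ⟨hk, he⟩, rfl⟩
  · rintro ⟨k, ⟨-, hk⟩, rfl⟩
    exact hk

theorem rim_injOn (hn : 3 ≤ n) :
    Set.InjOn (fun k => ({k, (k + 1) % n} : Finset ℕ)) (range n) := by
  intro j hj k hk h
  simp only at h
  have h1 : j ∈ ({k, (k + 1) % n} : Finset ℕ) := h ▸ by simp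
  have h2 : k ∈ ({j, (j + 1) % n} : Finset ℕ) := h ▸ by simp
  have := succ_mod_cases (mem_range.1 hj)
  have := succ_mod_cases (mem_range.1 hk)
  simp at h1 h2
  omega

theorem linkCycle_two_mul_card_le_card_shadowOf (hn : 3 ≤ n) {E' : Finset (Finset ℕ)}
    (hE' : E' ⊆ (linkCycle n).edges) : 2 * #E' ≤ #(shadowOf E') := by
  set K := {k ∈ range n | linkEdge n k ∈ E'}
  have hKn : ∀ k ∈ K, k < n := fun k hk => mem_range.1 (mem_filter.1 hk).1
  have hspoke : #(K.image fun k => ({n, k} : Finset ℕ)) = #K := by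
    refine card_image_of_injOn fun j hj k hk h => ?_
    have hj' : j ∈ ({n, k} : Finset ℕ) := h ▸ by simp
    have := hKn j hj
    simp at hj'
    omega
  have hrim : #(K.image fun k => ({k, (k + 1) % n} : Finset ℕ)) = #K :=
    card_image_of_injOn ((rim_injOn hn).mono (coe_subset.2 (filter_subset _ _)))
  have hdisj : Disjoint (K.image fun k => ({n, k} : Finset ℕ))
      (K.image fun k => ({k, (k + 1) % n} : Finset ℕ)) := by
    refine disjoint_left.2 fun s hs hs' => ?_
    obtain ⟨j, hj, rfl⟩ := mem_image.1 hs
    obtain ⟨k, hk, h⟩ := mem_image.1 hs'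
    have hn' : n ∈ ({k, (k + 1) % n} : Finset ℕ) := h ▸ by simp
    have := succ_mod_cases (hKn k hk)
    simp at hn'
    omega
  have hsub : (K.image fun k => ({n, k} : Finset ℕ)) ∪
      (K.image fun k => ({k, (k + 1) % n} : Finset ℕ)) ⊆ shadowOf E' := by
    intro s hs
    have hE : ∀ k ∈ K, linkEdge n k ∈ E' := fun k hk => (mem_filter.1 hk).2
    rcases mem_union.1 hs with hs | hs <;> obtain ⟨k, hk, rfl⟩ := mem_image.1 hs <;>
      have := succ_mod_cases (hKn k hk) <;>
      exact pair_mem_shadowOf (hE k hk) (by simp [linkEdge]) (by simp [linkEdge]) (by omega)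
  calc 2 * #E' ≤ 2 * #K := by
        rw [eq_image_linkEdge (by omega) hE']
        exact Nat.mul_le_mul_left 2 card_image_le
    _ = _ := by rw [card_union_of_disjoint hdisj, hspoke, hrim, two_mul]
    _ ≤ _ := card_le_card hsub

theorem linkCycle_imageDensity_le_half_of_injective (hn : 3 ≤ n)
    (hord : Set.InjOn ord (linkCycle n).verts) (hf : Function.Injective f)
    {E' : Finset (Finset ℕ)} (hE' : E' ⊆ (linkCycle n).edges) :
    imageDensity ord f E' ≤ 1 / 2 := by
  rw [imageDensity, imageEdges_eq_card_image hord hE', imageVerts, card_image_of_injective _ hf]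
  have h1 : #(E'.image (edgeImage ord f)) ≤ #E' := card_image_le
  have h2 := linkCycle_two_mul_card_le_card_shadowOf hn hE'
  refine div_le_of_le_mul₀ (by positivity) (by norm_num) ?_
  rw [one_div_mul_eq_div, le_div_iff₀ two_pos]
  exact_mod_cast (by omega : _ ≤ _)

/-- For even `n`, placing the centre `n` between the even and the odd cycle vertices makes it the
middle vertex of every edge. -/
def evenOrder (n v : ℕ) : ℕ := if v = n then n else if v % 2 = 0 then v else n + v

def evenLabel (n : ℕ) (s : Finset ℕ) : ℕ := if n ∈ s then (∑ i ∈ s, i) % 2 else 2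

theorem evenOrder_injOn : Set.InjOn (evenOrder n) (linkCycle n).verts := by
  intro a ha b hb h
  simp only [linkCycle, coe_insert, coe_range, Set.mem_insert_iff, Set.mem_Iio] at ha hb
  simp only [evenOrder] at h
  split_ifs at h <;> omega

theorem edgeImage_evenOrder_linkEdge (hn : 2 ≤ n) (heven : Even n) {k : ℕ} (hk : k < n) :
    edgeImage (evenOrder n) (evenLabel n) (linkEdge n k) = (0, 1, 2) := by
  obtain ⟨m, rfl⟩ := heven
  have hsucc := succ_mod_cases hk
  set k' := (k + 1) % (m + m)
  have hk' : k' < m + m := Nat.mod_lt _ (by omega)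
  obtain ⟨a, b, he, ha, hb, han, hbn⟩ : ∃ a b, linkEdge (m + m) k = {a, m + m, b} ∧
      a % 2 = 0 ∧ b % 2 = 1 ∧ a < m + m ∧ b < m + m := by
    rcases Nat.mod_two_eq_zero_or_one k with h | h
    · exact ⟨k, k', by ext; simp [linkEdge, k']; tauto, h, by omega, hk, hk'⟩
    · exact ⟨k', k, by ext; simp [linkEdge, k']; tauto, by omega, h, hk', hk⟩
  have hoa : evenOrder (m + m) a = a := by simp [evenOrder, han.ne, ha]
  have hob : evenOrder (m + m) b = m + m + b := by simp [evenOrder, hbn.ne, hb]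
  have hon : evenOrder (m + m) (m + m) = m + m := by simp [evenOrder]
  rw [edgeImage_eq he (by rw [hoa, hon]; omega) (by rw [hob, hon]; omega)]
  simp [evenLabel, han.ne, hbn.ne']
  omega

theorem oriented_singleton_zero_one_two : Oriented {((0 : ℕ), (1 : ℕ), (2 : ℕ))} := by
  rintro a b c h
  simp only [Set.mem_singleton_iff, Prod.mk.injEq] at h
  obtain ⟨rfl, rfl, rfl⟩ := h
  simp

theorem isPairHom_evenOrder (hn : 2 ≤ n) (heven : Even n) :
    IsPairHom (linkCycle n) (evenOrder n) {(0, 1, 2)} (evenLabel n) := by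
  refine isPairHom_of_edgeImage_mem oriented_singleton_zero_one_two evenOrder_injOn fun e he => ?_
  obtain ⟨k, hk, rfl⟩ := (mem_linkCycle_edges hn).1 he
  rw [edgeImage_evenOrder_linkEdge hn heven hk]
  rfl

theorem imageDensity_evenOrder (hn : 2 ≤ n) (heven : Even n) {E' : Finset (Finset ℕ)}
    (hE' : E' ⊆ (linkCycle n).edges) (hne : E'.Nonempty) :
    imageDensity (evenOrder n) (evenLabel n) E' = 1 / 3 := by
  have himage : E'.image (edgeImage (evenOrder n) (evenLabel n)) = {(0, 1, 2)} := by
    rw [← image_const hne (0, 1, 2)]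
    refine image_congr fun e he => ?_
    obtain ⟨k, hk, rfl⟩ := (mem_linkCycle_edges hn).1 (hE' he)
    exact edgeImage_evenOrder_linkEdge hn heven hk
  rw [imageDensity, imageEdges_eq_card_image evenOrder_injOn hE',
    imageVerts_eq_card_biUnion evenOrder_injOn hE', ← image_biUnion, himage, singleton_biUnion]
  norm_num [tripleSet]

/-- The closed walk `x₀, S₀, x₁, S₁, …, x₀` in the incidence graph of the image of `L_n`, where
`xₖ = f {n, k}` is the image of the `k`-th spoke and `Sₖ` the vertex set of the image of the `k`-th
edge. -/
noncomputable def linkWalk (n : ℕ) (ord : ℕ → ℕ) (f : Finset ℕ → ℕ) (j : ℕ) : ℕ ⊕ Finset ℕ :=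
  if j % 2 = 0 then .inl (f {n, j / 2 % n})
  else .inr (tripleSet (edgeImage ord f (linkEdge n (j / 2 % n))))

theorem linkWalk_step (j : ℕ) :
    s(linkWalk n ord f j, linkWalk n ord f (j + 1)) =
      s(.inl (f {n, (j + 1) / 2 % n}),
        .inr (tripleSet (edgeImage ord f (linkEdge n (j / 2 % n))))) := by
  obtain ⟨k, rfl | rfl⟩ := Nat.even_or_odd' j
  · simp [linkWalk, show (2 * k + 1) / 2 = k by omega]
  · simp [linkWalk, show (2 * k + 1 + 1) / 2 = k + 1 by omega, show (2 * k + 1) / 2 = k by omega,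
      show (2 * k + 1 + 1) % 2 = 0 by omega, Sym2.eq_swap]

theorem linkWalk_two_mul : linkWalk n ord f (2 * n) = linkWalk n ord f 0 := by
  simp [linkWalk]

theorem linkWalk_adj (hn : 2 ≤ n) (hord : Set.InjOn ord (linkCycle n).verts) (j : ℕ) :
    (incidenceGraph (imageSets (linkCycle n) ord f)).Adj (linkWalk n ord f j)
      (linkWalk n ord f (j + 1)) := by
  rw [← SimpleGraph.mem_edgeSet, linkWalk_step, SimpleGraph.mem_edgeSet,
    incidenceGraph_adj_inl_inr]
  set k := j / 2 % n
  have hk : k < n := Nat.mod_lt _ (by omega)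
  have he := linkEdge_mem_edges hn hk
  refine ⟨⟨linkEdge n k, he, rfl⟩, ?_⟩
  rw [tripleSet_edgeImage_of_mem_edges hord he]
  have hspoke : (j + 1) / 2 % n = k ∨ (j + 1) / 2 % n = (k + 1) % n := by
    rcases Nat.even_or_odd' j with ⟨i, rfl | rfl⟩
    · left; simp only [k]; congr 1; omega
    · right; simp only [k, Nat.mod_add_mod]; congr 1; omega
  have hlt : (j + 1) / 2 % n < n := Nat.mod_lt _ (by omega)
  refine mem_image_of_mem f (mem_powersetCard.2 ⟨?_, card_pair (by omega)⟩)
  intro x hx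
  simp only [linkEdge, mem_insert, mem_singleton] at hx ⊢
  omega

theorem even_card_outer_spoke_steps (hn : 2 ≤ n) (hE : Oriented E)
    (hf : IsPairHom (linkCycle n) ord E f) (hB : ¬HasBergeCycle (imageSets (linkCycle n) ord f)) :
    Even #{j ∈ range (2 * n) |
      f {n, (j + 1) / 2 % n} = (edgeImage ord f (linkEdge n (j / 2 % n))).2.2} := by
  have hforest := (isAcyclic_incidenceGraph_of_not_hasBergeCycle hB).even_card_filter_sym2_eq
    (fun j _ => linkWalk_adj hn hf.1 j) linkWalk_two_mul
  refine even_card_filter_of_even_card_fibers _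
    (fun j => s(linkWalk n ord f j, linkWalk n ord f (j + 1))) _ (fun i _ j _ hij => ?_) hforest
  simp only [linkWalk_step, Sym2.eq_iff, Sum.inl.injEq, Sum.inr.injEq, reduceCtorEq, and_false,
    or_false] at hij
  have hmem : ∀ j, edgeImage ord f (linkEdge n (j / 2 % n)) ∈ E := fun j =>
    hf.edgeImage_mem (linkEdge_mem_edges hn (Nat.mod_lt _ (by omega)))
  rw [hij.1, hE.eq_of_tripleSet_eq (hmem i) (hmem j) hij.2]

theorem card_outer_spoke_steps (hn : 2 ≤ n) (hf : IsPairHom (linkCycle n) ord E f) :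
    #{j ∈ range (2 * n) |
      f {n, (j + 1) / 2 % n} = (edgeImage ord f (linkEdge n (j / 2 % n))).2.2} =
    #{k ∈ range n | ord (k % n) < ord n ↔ ord ((k + 1) % n) < ord n} := by
  rw [card_filter, card_filter, sum_range_two_mul]
  refine sum_congr rfl fun k hk => ?_
  have hk : k < n := mem_range.1 hk
  have hsucc := succ_mod_cases hk
  have he := linkEdge_mem_edges hn hk
  have hne : ∀ {a b}, a ∈ linkEdge n k → b ∈ linkEdge n k → a ≠ b → ord a ≠ ord b :=
    fun ha hb hab h => hab (injOn_of_mem_edges hf.1 he ha hb h)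
  simp only [show (2 * k + 1) / 2 = k by omega, show 2 * k / 2 = k by omega,
    show (2 * k + 1 + 1) / 2 = k + 1 by omega, Nat.mod_eq_of_lt hk]
  exact outer_pair_through_count (hne (by simp [linkEdge]) (by simp [linkEdge]) (by omega))
    (hne (by simp [linkEdge]) (by simp [linkEdge]) (by omega))
    (hne (by simp [linkEdge]) (by simp [linkEdge]) (by omega))
    fun u v w hdec h1 h2 =>
      ⟨(hf.2 _ he u v w hdec h1 h2).1.2.2, (hf.2 _ he u v w hdec h1 h2).1.2.1⟩

theorem linkCycle_even_of_not_hasBergeCycle (hn : 2 ≤ n) (hE : Oriented E)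
    (hf : IsPairHom (linkCycle n) ord E f) (hB : ¬HasBergeCycle (imageSets (linkCycle n) ord f)) :
    Even n := by
  have hextreme := even_card_outer_spoke_steps hn hE hf hB
  rw [card_outer_spoke_steps hn hf] at hextreme
  have hmiddle := (even_card_filter_not_iff_succ_iff (fun k => ord (k % n) < ord n) n).2
    (by simp)
  rw [← card_range n, ← card_filter_add_card_filter_not
    (fun k => ord (k % n) < ord n ↔ ord ((k + 1) % n) < ord n)]
  exact hextreme.add hmiddle

end LinkCycle

/-- For `n ≥ 3`, `m_pair(L_n^{(3)}) = 1/2` if `n` is odd and `= 1/3` if `n`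
is even. -/
theorem mpair_linkCycle (n : ℕ) (hn : 3 ≤ n) :
    (Odd n → mpair (linkCycle n) = 1 / 2) ∧
    (Even n → mpair (linkCycle n) = 1 / 3) := by
  have hord : Set.InjOn (id : ℕ → ℕ) (linkCycle n).verts := Set.injOn_id _
  have hencE := oriented_image_edgeImage hord (Encodable.encode_injective (α := Finset ℕ))
  have hencf := isPairHom_of_edgeImage_mem hencE hord fun e he => ⟨e, he, rfl⟩
  have hinj : ∃ ord E f, Oriented E ∧ IsPairHom (linkCycle n) ord E f := ⟨_, _, _, hencE, hencf⟩
  have hne : (linkCycle n).edges.Nonempty := ⟨_, linkEdge_mem_edges (by omega) (by omega : 0 < n)⟩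
  have hthird : 1 / 3 ≤ mpair (linkCycle n) := le_mpair hinj fun _ _ _ _ hf =>
    ⟨_, subset_rfl, hne, third_le_imageDensity hf.1 subset_rfl hne⟩
  refine ⟨fun hodd => le_antisymm ?_ ?_, fun heven => le_antisymm ?_ hthird⟩
  · exact mpair_le hencE hencf (by norm_num) fun E' hE' _ =>
      linkCycle_imageDensity_le_half_of_injective hn hord Encodable.encode_injective hE'
  · refine le_mpair hinj fun ord E f hE hf => ?_
    by_cases hB : HasBergeCycle (imageSets (linkCycle n) ord f)
    · exact exists_half_le_imageDensity_of_hasBergeCycle hf.1 hB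
    · exact absurd (linkCycle_even_of_not_hasBergeCycle (by omega) hE hf hB)
        (Nat.not_even_iff_odd.2 hodd)
  · exact mpair_le oriented_singleton_zero_one_two (isPairHom_evenOrder (by omega) heven)
      (by norm_num) fun E' hE' hne => (imageDensity_evenOrder (by omega) heven hE' hne).le
end
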